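/- arXiv:2112.09518 — 4 statements merged into one kernel-verified Lean document; each statement's English description precedes it below -/
import Mathlib

section
/- Let K ⊆ ℝⁿ be a compact convex set, regard K × {0} as a subset of ℝⁿ⁺¹ = ℝⁿ × ℝ, and let v = (w, h) ∈ ℝⁿ × ℝ be any point. Then the (n+1)-dimensional Lebesgue measure of the convex hull of {v} ∪ (K × {0}) equals |h| · volₙ(K) / (n+1), where volₙ(K) is the n-dimensional Lebesgue measure of K. -/
open MeasureTheory
open scoped ENNReal
open scoped Pointwise

private lemma uIcc_div_iff {h : ℝ} (hh : h ≠ 0) (y : ℝ) :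
    y ∈ Set.uIcc 0 h ↔ y / h ∈ Set.Icc (0:ℝ) 1 := by
  rcases lt_or_gt_of_ne hh with hl | hl
  · rw [Set.uIcc_of_ge hl.le, Set.mem_Icc, Set.mem_Icc,
      le_div_iff_of_neg hl, div_le_iff_of_neg hl]
    constructor <;> intro ⟨a, b⟩ <;> constructor <;> linarith
  · rw [Set.uIcc_of_le hl.le, Set.mem_Icc, Set.mem_Icc,
      le_div_iff₀ hl, div_le_iff₀ hl]
    constructor <;> intro ⟨a, b⟩ <;> constructor <;> linarith

private lemma integral_aux (n : ℕ) {h : ℝ} (hh : h ≠ 0) :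
    ∫ y in Set.uIcc 0 h, (1 - y/h)^n = |h| / (n+1) := by
  have hD : ∀ y : ℝ, HasDerivAt (fun y : ℝ => (-h/(n+1)) * (1 - y/h)^(n+1)) ((1 - y/h)^n) y := by
    intro y
    have d1 : HasDerivAt (fun y : ℝ => 1 - y/h) (-(1/h)) y := by
      simpa using ((hasDerivAt_id y).div_const h).const_sub 1
    have d2 := (d1.pow (n+1)).const_mul (-h/(n+1))
    refine d2.congr_deriv ?_
    have : ((n:ℝ)+1) ≠ 0 := by positivity
    push_cast
    field_simp
  have hInt : ∀ a b : ℝ, IntervalIntegrable (fun y : ℝ => (1 - y/h)^n) volume a b := by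
    intro a b
    exact (Continuous.intervalIntegrable (by continuity) a b)
  rcases lt_or_gt_of_ne hh with hl | hl
  · rw [Set.uIcc_of_ge hl.le, MeasureTheory.integral_Icc_eq_integral_Ioc,
      ← intervalIntegral.integral_of_le hl.le,
      intervalIntegral.integral_eq_sub_of_hasDerivAt (fun y _ => hD y) (hInt h 0)]
    rw [abs_of_neg hl]
    field_simp
    simp [hh]
  · rw [Set.uIcc_of_le hl.le, MeasureTheory.integral_Icc_eq_integral_Ioc,
      ← intervalIntegral.integral_of_le hl.le,
      intervalIntegral.integral_eq_sub_of_hasDerivAt (fun y _ => hD y) (hInt 0 h)]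
    rw [abs_of_pos hl]
    field_simp
    simp [hh]

/-- The volume of a pyramid in `ℝⁿ × ℝ` with apex `v = (w, h)` over a compact convex base
`K × {0}` equals `|h| · volₙ(K) / (n+1)`. -/
theorem pyramid_volume (n : ℕ) (K : Set (Fin n → ℝ)) (hK : IsCompact K) (hKc : Convex ℝ K)
    (v : (Fin n → ℝ) × ℝ) :
    volume (convexHull ℝ ({v} ∪ K ×ˢ ({0} : Set ℝ))) =
      ENNReal.ofReal |v.2| * volume K / ((n : ℝ≥0∞) + 1) := by
  classical
  rcases K.eq_empty_or_nonempty with rfl | hne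
  · simp only [Set.empty_prod, Set.union_empty, convexHull_singleton, measure_empty,
      mul_zero, ENNReal.zero_div]
    refine measure_mono_null (t := (Set.univ : Set (Fin n → ℝ)) ×ˢ ({v.2} : Set ℝ))
      (fun p hp => Set.mem_singleton_iff.mp hp ▸ Set.mem_prod.mpr ⟨Set.mem_univ _, rfl⟩) ?_
    rw [Measure.volume_eq_prod, Measure.prod_prod, measure_singleton, mul_zero]
  rcases eq_or_ne v.2 0 with h0 | hh
  · rw [h0, abs_zero, ENNReal.ofReal_zero, zero_mul, ENNReal.zero_div]
    refine measure_mono_null (t := (Set.univ : Set (Fin n → ℝ)) ×ˢ ({0} : Set ℝ)) ?_ ?_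
    · refine convexHull_min ?_ ((convex_univ (𝕜 := ℝ)).prod (convex_singleton 0))
      rintro p (rfl | hp)
      · exact ⟨Set.mem_univ _, h0⟩
      · exact ⟨Set.mem_univ _, hp.2⟩
    · rw [Measure.volume_eq_prod, Measure.prod_prod, measure_singleton, mul_zero]
  -- main case
  set w := v.1
  set h := v.2
  set f : ℝ × (Fin n → ℝ) → (Fin n → ℝ) × ℝ :=
    fun q => (q.1 • w + (1 - q.1) • q.2, q.1 * h) with hf
  have hfc : Continuous f := by fun_prop
  have hP : convexHull ℝ ({v} ∪ K ×ˢ ({0} : Set ℝ)) = f '' (Set.Icc 0 1 ×ˢ K) := by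
    rw [Set.singleton_union, convexHull_insert (hne.prod (Set.singleton_nonempty 0)),
      (hKc.prod (convex_singleton 0)).convexHull_eq]
    ext p
    rw [mem_convexJoin]
    constructor
    · rintro ⟨a, ha, b, hb, hseg⟩
      rw [Set.mem_singleton_iff] at ha
      subst ha
      rw [segment_eq_image] at hseg
      obtain ⟨θ, ⟨hθ0, hθ1⟩, rfl⟩ := hseg
      obtain ⟨hb1, hb2⟩ := hb
      refine ⟨(1 - θ, b.1), ⟨⟨show (0:ℝ) ≤ 1 - θ by linarith, show (1:ℝ) - θ ≤ 1 by linarith⟩, hb1⟩, ?_⟩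
      rw [Prod.ext_iff]
      constructor
      · simp [hf, sub_sub_cancel]; rfl
      · simp only [hf, Prod.snd_add, Prod.smul_snd, smul_eq_mul]
        rw [Set.mem_singleton_iff.mp hb2]
        ring
    · rintro ⟨⟨s, k⟩, ⟨⟨hs0, hs1⟩, hk⟩, rfl⟩
      refine ⟨v, rfl, (k, 0), ⟨hk, rfl⟩, ?_⟩
      rw [segment_eq_image]
      refine ⟨1 - s, ⟨by linarith, by linarith⟩, ?_⟩
      rw [Prod.ext_iff]
      constructor
      · simp [hf, sub_sub_cancel]; rfl
      · simp only [hf, Prod.snd_add, Prod.smul_snd, smul_eq_mul]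
        ring
  have hPc : IsCompact (f '' (Set.Icc 0 1 ×ˢ K)) := (isCompact_Icc.prod hK).image hfc
  have hPm : MeasurableSet (f '' (Set.Icc 0 1 ×ˢ K)) := hPc.isClosed.measurableSet
  have hslice : ∀ y : ℝ, (fun x => (x, y)) ⁻¹' (f '' (Set.Icc 0 1 ×ˢ K)) =
      if y ∈ Set.uIcc 0 h then (((y/h) • w) +ᵥ ((1 - y/h) • K : Set (Fin n → ℝ))) else (∅ : Set (Fin n → ℝ)) := by
    intro y
    ext x
    simp only [Set.mem_preimage, Set.mem_image]
    split_ifs with hy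
    · constructor
      · rintro ⟨⟨s, k⟩, ⟨⟨hs0, hs1⟩, hk⟩, heq⟩
        rw [Prod.ext_iff] at heq
        obtain ⟨hx, hy2⟩ := heq
        simp only [hf] at hx hy2
        have hs : s = y / h := by field_simp [hy2]; exact hy2
        rw [Set.mem_vadd_set]
        exact ⟨(1 - y/h) • k, Set.smul_mem_smul_set hk, by rw [← hx, hs]; rfl⟩
      · rw [Set.mem_vadd_set]
        rintro ⟨z, hz, rfl⟩
        obtain ⟨k, hk, rfl⟩ := hz
        have hdiv := (uIcc_div_iff hh y).mp hy
        refine ⟨(y/h, k), ⟨hdiv, hk⟩, ?_⟩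
        rw [Prod.ext_iff]
        exact ⟨rfl, by simp only [hf]; exact div_mul_cancel₀ y hh⟩
    · simp only [Set.mem_empty_iff_false, iff_false]
      rintro ⟨⟨s, k⟩, ⟨⟨hs0, hs1⟩, hk⟩, heq⟩
      rw [Prod.ext_iff] at heq
      obtain ⟨hx, hy2⟩ := heq
      simp only [hf] at hy2
      apply hy
      rw [uIcc_div_iff hh]
      have : y / h = s := by field_simp [hy2]; rw [← hy2]; ring
      rw [this]
      exact ⟨hs0, hs1⟩
  rw [hP, Measure.volume_eq_prod, Measure.prod_apply_symm hPm]
  have hcalc : ∀ y : ℝ, volume ((fun x => (x, y)) ⁻¹' (f '' (Set.Icc 0 1 ×ˢ K))) =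
      Set.indicator (Set.uIcc 0 h)
        (fun y => ENNReal.ofReal (|(1 - y/h) ^ n|) * volume K) y := by
    intro y
    rw [hslice y]
    split_ifs with hy
    · rw [Set.indicator_of_mem hy, measure_vadd, Measure.addHaar_smul,
        Module.finrank_fin_fun, abs_pow]
    · rw [Set.indicator_of_notMem hy, measure_empty]
  calc ∫⁻ y, volume ((fun x => (x, y)) ⁻¹' (f '' (Set.Icc 0 1 ×ˢ K)))
      = ∫⁻ y, Set.indicator (Set.uIcc 0 h)
        (fun y => ENNReal.ofReal (|(1 - y/h) ^ n|) * volume K) y := by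
        exact lintegral_congr hcalc
    _ = ∫⁻ y in Set.uIcc 0 h, ENNReal.ofReal (|(1 - y/h) ^ n|) * volume K := by
        rw [lintegral_indicator measurableSet_uIcc]
    _ = (∫⁻ y in Set.uIcc 0 h, ENNReal.ofReal (|(1 - y/h) ^ n|)) * volume K := by
        rw [lintegral_mul_const]
        exact (ENNReal.measurable_ofReal.comp (by fun_prop))
    _ = ENNReal.ofReal (∫ y in Set.uIcc 0 h, |(1 - y/h) ^ n|) * volume K := by
        rw [← ofReal_integral_eq_lintegral_ofReal]
        · exact Continuous.integrableOn_uIcc (((continuous_const.sub (continuous_id.div_const h)).pow n).abs)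
        · exact Filter.Eventually.of_forall fun y => abs_nonneg _
    _ = ENNReal.ofReal (|h| / (n+1)) * volume K := by
        congr 1
        rw [← integral_aux n hh]
        congr 1
        refine setIntegral_congr_fun (f := fun y => |(1 - y/h) ^ n|) (g := fun y => (1 - y/h) ^ n) measurableSet_uIcc fun y hy => ?_
        show |(1 - y/h) ^ n| = (1 - y/h) ^ n
        rw [abs_pow, abs_of_nonneg]
        have := ((uIcc_div_iff hh y).mp hy).2
        linarith
    _ = ENNReal.ofReal |h| * volume K / ((n : ℝ≥0∞) + 1) := by
        rw [ENNReal.ofReal_div_of_pos (by positivity), div_eq_mul_inv, div_eq_mul_inv]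
        rw [ENNReal.ofReal_add (Nat.cast_nonneg n) zero_le_one, ENNReal.ofReal_natCast,
          ENNReal.ofReal_one]
        ring
end

section
/- Let f₁, …, fₛ (s ≥ 1) be linear forms on ℝⁿ and b₁, …, bₛ ∈ ℝ, and suppose the set P = {x ∈ ℝⁿ : fᵢ(x) ≤ bᵢ for all i} is compact. Let v ∈ P. Then P is the union over i = 1, …, s of the convex hulls conv({v} ∪ (P ∩ {x : fᵢ(x) = bᵢ})). -/
/-- If `P = {x : fᵢ(x) ≤ bᵢ for all i}` is compact and `v ∈ P`, then `P` is covered by the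
pyramids with apex `v` over the sets `P ∩ {x : fᵢ(x) = bᵢ}`. -/
theorem polytope_eq_union_pyramids (n s : ℕ) (hs : 1 ≤ s)
    (f : Fin s → ((Fin n → ℝ) →ₗ[ℝ] ℝ)) (b : Fin s → ℝ)
    (P : Set (Fin n → ℝ)) (hP : P = {x | ∀ i, f i x ≤ b i}) (hPc : IsCompact P)
    (v : Fin n → ℝ) (hv : v ∈ P) :
    P = ⋃ i : Fin s, convexHull ℝ ({v} ∪ (P ∩ {x | f i x = b i})) := by
  have hPconv : Convex ℝ P := by
    rw [hP]
    have : {x : Fin n → ℝ | ∀ i, f i x ≤ b i} = ⋂ i, {x | f i x ≤ b i} := by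
      ext x; simp
    rw [this]
    exact convex_iInter fun i => convex_halfSpace_le (f i).isLinear (b i)
  ext x
  simp only [Set.mem_iUnion]
  constructor
  · intro hx
    by_cases hxv : x = v
    · refine ⟨⟨0, hs⟩, ?_⟩
      exact subset_convexHull ℝ _ (Or.inl (by simp [hxv]))
    · set u : Fin n → ℝ := x - v with hu_def
      have hu : u ≠ 0 := sub_ne_zero.mpr hxv
      set T : Finset (Fin s) := Finset.univ.filter (fun i => 0 < f i u) with hT_def
      have hPx : ∀ y ∈ P, ∀ i, f i y ≤ b i := by
        intro y hy i; rw [hP] at hy; exact hy i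
      by_cases hT : T.Nonempty
      · set g : Fin s → ℝ := fun i => (b i - f i v) / f i u with hg_def
        set t₀ : ℝ := T.inf' hT g with ht₀_def
        obtain ⟨i₀, hi₀T, hi₀⟩ := T.exists_mem_eq_inf' hT g
        have hi₀pos : 0 < f i₀ u := by
          simpa [hT_def] using hi₀T
        have hg1 : ∀ i ∈ T, 1 ≤ g i := by
          intro i hiT
          have hipos : 0 < f i u := by simpa [hT_def] using hiT
          rw [hg_def, le_div_iff₀ hipos, one_mul]
          have : f i v + f i u ≤ b i := by
            have := hPx x hx i
            simpa [hu_def, map_sub] using this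
          linarith
        have ht₀1 : 1 ≤ t₀ := Finset.le_inf' hT g hg1
        have ht₀pos : 0 < t₀ := lt_of_lt_of_le one_pos ht₀1
        set w : Fin n → ℝ := v + t₀ • u with hw_def
        have hfw : ∀ i, f i w = f i v + t₀ * f i u := by
          intro i; simp [hw_def, map_add, map_smul, smul_eq_mul]
        have hwP : w ∈ P := by
          rw [hP]
          intro i
          rw [hfw i]
          by_cases hi : 0 < f i u
          · have hiT : i ∈ T := by simp [hT_def, hi]
            have : t₀ ≤ g i := Finset.inf'_le g hiT
            have : t₀ * f i u ≤ b i - f i v := by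
              rw [hg_def] at this
              calc t₀ * f i u ≤ ((b i - f i v) / f i u) * f i u :=
                    mul_le_mul_of_nonneg_right this hi.le
                _ = b i - f i v := div_mul_cancel₀ _ (ne_of_gt hi)
            linarith
          · push_neg at hi
            have h1 : t₀ * f i u ≤ 0 := mul_nonpos_of_nonneg_of_nonpos ht₀pos.le hi
            have h2 : f i v ≤ b i := hPx v hv i
            linarith
        have hweq : f i₀ w = b i₀ := by
          rw [hfw i₀, ht₀_def, hi₀, hg_def, div_mul_cancel₀ _ (ne_of_gt hi₀pos)]
          ring
        refine ⟨i₀, ?_⟩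
        have hvmem : v ∈ convexHull ℝ ({v} ∪ (P ∩ {x | f i₀ x = b i₀})) :=
          subset_convexHull ℝ _ (Or.inl rfl)
        have hwmem : w ∈ convexHull ℝ ({v} ∪ (P ∩ {x | f i₀ x = b i₀})) :=
          subset_convexHull ℝ _ (Or.inr ⟨hwP, hweq⟩)
        have hxeq : x = (1 - 1/t₀) • v + (1/t₀) • w := by
          rw [hw_def]
          have : (1/t₀) • (v + t₀ • u) = (1/t₀) • v + u := by
            rw [smul_add, smul_smul, one_div, inv_mul_cancel₀ (ne_of_gt ht₀pos), one_smul]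
          rw [this]
          rw [sub_smul, one_smul]
          rw [hu_def]
          abel
        rw [hxeq]
        have h1t : 1/t₀ ≤ 1 := by rw [div_le_one ht₀pos]; exact ht₀1
        have h0t : 0 < 1/t₀ := by positivity
        exact (convex_convexHull ℝ _) hvmem hwmem (by linarith) (by linarith) (by ring)
      · -- no i with 0 < f i u : the ray stays in P, contradicting boundedness
        exfalso
        have hall : ∀ i, f i u ≤ 0 := by
          intro i
          by_contra h
          push_neg at h
          exact hT ⟨i, by simp [hT_def, h]⟩
        have hray : ∀ t : ℝ, 0 ≤ t → v + t • u ∈ P := by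
          intro t ht
          rw [hP]
          intro i
          have : f i (v + t • u) = f i v + t * f i u := by
            simp [map_add, map_smul, smul_eq_mul]
          rw [this]
          have h1 : t * f i u ≤ 0 := mul_nonpos_of_nonneg_of_nonpos ht (hall i)
          have h2 : f i v ≤ b i := hPx v hv i
          linarith
        obtain ⟨C, hC⟩ := hPc.isBounded.exists_norm_le
        have hupos : (0:ℝ) < ‖u‖ := norm_pos_iff.mpr hu
        set t : ℝ := (C + ‖v‖ + 1) / ‖u‖ with ht_def
        have htnn : 0 ≤ t := by
          have hCnn : 0 ≤ C := le_trans (norm_nonneg v) (hC v hv)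
          positivity
        have hmem := hray t htnn
        have hle := hC _ hmem
        have hnorm : ‖t • u‖ ≤ ‖v + t • u‖ + ‖v‖ := by
          have h := norm_sub_le (v + t • u) v
          simpa [add_sub_cancel_left] using h
        rw [norm_smul, Real.norm_eq_abs, abs_of_nonneg htnn] at hnorm
        have : t * ‖u‖ = C + ‖v‖ + 1 := div_mul_cancel₀ _ (ne_of_gt hupos)
        linarith
  · rintro ⟨i, hi⟩
    have hsub : ({v} ∪ (P ∩ {x | f i x = b i})) ⊆ P := by
      rintro y (rfl | ⟨hyP, _⟩)
      · exact hv
      · exact hyP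
    exact convexHull_min hsub hPconv hi
end

section
/- Let f₁, …, fₛ (s ≥ 1) be nonzero linear forms on ℝⁿ and b₁, …, bₛ ∈ ℝ such that the hyperplanes Hᵢ = {x : fᵢ(x) = bᵢ} are pairwise distinct as subsets of ℝⁿ, and suppose P = {x ∈ ℝⁿ : fᵢ(x) ≤ bᵢ for all i} is compact. Let v ∈ P. Then the Lebesgue measure of P equals the sum over i = 1, …, s of the Lebesgue measures of the convex hulls conv({v} ∪ (P ∩ Hᵢ)). -/
open MeasureTheory

/-- A hyperplane has Lebesgue measure zero. -/
lemma hyperplane_volume_zero {n : ℕ} (g : (Fin n → ℝ) →ₗ[ℝ] ℝ) (hg : g ≠ 0) (c : ℝ) :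
    volume {x : Fin n → ℝ | g x = c} = 0 := by
  obtain ⟨y, hy⟩ : ∃ y, g y ≠ 0 := by
    by_contra h
    push_neg at h
    exact hg (LinearMap.ext fun z => by simp [h z])
  set x0 : Fin n → ℝ := (-c / g y) • y with hx0
  have hgx0 : g x0 = -c := by
    rw [hx0, LinearMap.map_smul, smul_eq_mul, div_mul_cancel₀ _ hy]
  have hset : {x : Fin n → ℝ | g x = c} = (· + x0) ⁻¹' (LinearMap.ker g : Set (Fin n → ℝ)) := by
    ext x
    simp only [Set.mem_setOf_eq, Set.mem_preimage, SetLike.mem_coe, LinearMap.mem_ker, map_add,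
      hgx0]
    constructor
    · intro h; rw [h]; ring
    · intro h; linarith
  rw [hset, measure_preimage_add_right]
  exact Measure.addHaar_submodule volume _ (fun h => hg (LinearMap.ker_eq_top.mp h))

set_option maxHeartbeats 1600000 in
/-- If `P = {x : fᵢ(x) ≤ bᵢ for all i}` is compact, the `fᵢ` are nonzero, the bounding
hyperplanes are pairwise distinct, and `v ∈ P`, then the volume of `P` is the sum of the
volumes of the pyramids with apex `v` over the sets `P ∩ {x : fᵢ(x) = bᵢ}`. -/
theorem polytope_volume_eq_sum_pyramids (n s : ℕ) (hs : 1 ≤ s)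
    (f : Fin s → ((Fin n → ℝ) →ₗ[ℝ] ℝ)) (b : Fin s → ℝ)
    (hf : ∀ i, f i ≠ 0)
    (hdist : ∀ i j : Fin s, i ≠ j →
      ({x | f i x = b i} : Set (Fin n → ℝ)) ≠ {x | f j x = b j})
    (P : Set (Fin n → ℝ)) (hP : P = {x | ∀ i, f i x ≤ b i}) (hPc : IsCompact P)
    (v : Fin n → ℝ) (hv : v ∈ P) :
    volume P = ∑ i : Fin s, volume (convexHull ℝ ({v} ∪ (P ∩ {x | f i x = b i}))) := by
  set H : Fin s → Set (Fin n → ℝ) := fun i => {x | f i x = b i} with hH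
  set F : Fin s → Set (Fin n → ℝ) := fun i => P ∩ H i with hF
  set Q : Fin s → Set (Fin n → ℝ) := fun i => convexHull ℝ ({v} ∪ F i) with hQ
  have i0 : Fin s := ⟨0, hs⟩
  have hPconv : Convex ℝ P := by
    rw [hP]
    have : {x : Fin n → ℝ | ∀ i, f i x ≤ b i} = ⋂ i, {x | f i x ≤ b i} := by
      ext x; simp
    rw [this]
    exact convex_iInter fun i => convex_halfSpace_le (f i).isLinear (b i)
  have hle : ∀ i, f i v ≤ b i := by rw [hP] at hv; exact hv
  have hQP : ∀ i, Q i ⊆ P := by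
    intro i
    apply convexHull_min _ hPconv
    rintro x (rfl | hx)
    · exact hv
    · exact hx.1
  have hQconv : ∀ i, Convex ℝ (Q i) := fun i => convex_convexHull ℝ _
  have hvQ : ∀ i, v ∈ Q i := fun i => subset_convexHull ℝ _ (Or.inl rfl)
  have hFconv : ∀ i, Convex ℝ (F i) :=
    fun i => hPconv.inter (convex_hyperplane (f i).isLinear (b i))
  -- decomposition of points of pyramids
  have hQmem : ∀ i, ∀ x ∈ Q i, ∃ w ∈ F i ∪ {v}, ∃ t : ℝ, 0 ≤ t ∧ t ≤ 1 ∧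
      x = (1 - t) • v + t • w := by
    intro i x hx
    simp only [hQ] at hx
    rcases Set.eq_empty_or_nonempty (F i) with hFe | hFne
    · simp only [hFe, Set.union_empty, convexHull_singleton, Set.mem_singleton_iff] at hx
      exact ⟨v, Or.inr rfl, 0, le_refl _, zero_le_one, by rw [hx]; module⟩
    · simp only [Set.singleton_union] at hx
      rw [convexHull_insert hFne, (hFconv i).convexHull_eq] at hx
      obtain ⟨w, hw, hxw⟩ := Set.mem_iUnion₂.mp hx
      rw [Set.mem_singleton_iff] at hw
      subst hw
      obtain ⟨z, hz, hxz⟩ := Set.mem_iUnion₂.mp hxw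
      rw [segment_eq_image] at hxz
      obtain ⟨t, ht, hxt⟩ := hxz
      exact ⟨z, Or.inl hz, t, ht.1, ht.2, hxt.symm⟩
  -- P is covered by the pyramids
  have hcover : P ⊆ ⋃ i, Q i := by
    intro x hx
    by_cases hxv : x = v
    · exact Set.mem_iUnion.mpr ⟨i0, hxv ▸ hvQ i0⟩
    set d : Fin n → ℝ := x - v with hd
    have hd0 : d ≠ 0 := fun h => hxv (sub_eq_zero.mp h)
    set T : Set ℝ := {t : ℝ | 0 ≤ t ∧ v + t • d ∈ P} with hT
    have h1T : (1 : ℝ) ∈ T := ⟨zero_le_one, by rw [hd]; simpa using hx⟩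
    have hTne : T.Nonempty := ⟨1, h1T⟩
    obtain ⟨C, hC⟩ := hPc.isBounded.exists_norm_le
    have hTbdd : BddAbove T := by
      refine ⟨(C + ‖v‖) / ‖d‖, fun t ht => ?_⟩
      have hdn : 0 < ‖d‖ := norm_pos_iff.mpr hd0
      rw [le_div_iff₀ hdn]
      have h1 : ‖v + t • d‖ ≤ C := hC _ ht.2
      have h2 : ‖t • d‖ ≤ ‖v + t • d‖ + ‖v‖ := by
        calc ‖t • d‖ = ‖(v + t • d) - v‖ := by congr 1; abel
        _ ≤ ‖v + t • d‖ + ‖v‖ := norm_sub_le _ _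
      rw [norm_smul, Real.norm_eq_abs, abs_of_nonneg ht.1] at h2
      linarith
    have hcont : Continuous (fun t : ℝ => v + t • d) := by continuity
    have hTclosed : IsClosed T := by
      have : T = Set.Ici (0:ℝ) ∩ (fun t : ℝ => v + t • d) ⁻¹' P := by
        ext t; simp [hT, Set.mem_Ici]
      rw [this]
      exact isClosed_Ici.inter (hPc.isClosed.preimage hcont)
    set t0 : ℝ := sSup T with ht0
    have ht0T : t0 ∈ T := hTclosed.csSup_mem hTne hTbdd
    have ht01 : 1 ≤ t0 := le_csSup hTbdd h1T
    have hwP : v + t0 • d ∈ P := ht0T.2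
    have hex : ∃ i, f i (v + t0 • d) = b i := by
      by_contra hno
      push_neg at hno
      have hwP' : ∀ i, f i (v + t0 • d) ≤ b i := by rw [hP] at hwP; exact hwP
      have hwlt : ∀ i, f i (v + t0 • d) < b i := fun i => lt_of_le_of_ne (hwP' i) (hno i)
      set U : Set (Fin n → ℝ) := ⋂ i, {x | f i x < b i} with hU
      have hUopen : IsOpen U := isOpen_iInter_of_finite fun i =>
        isOpen_lt (f i).continuous_of_finiteDimensional continuous_const
      have hUP : U ⊆ P := by
        rw [hP]; intro y hy j; exact le_of_lt (Set.mem_iInter.mp hy j)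
      have hopen : IsOpen ((fun t : ℝ => v + t • d) ⁻¹' U) := hUopen.preimage hcont
      have ht0U : t0 ∈ (fun t : ℝ => v + t • d) ⁻¹' U := by
        simp only [Set.mem_preimage, hU, Set.mem_iInter, Set.mem_setOf_eq]
        exact hwlt
      obtain ⟨ε, hε, hball⟩ := Metric.isOpen_iff.mp hopen t0 ht0U
      have hmem : t0 + ε/2 ∈ T := by
        constructor
        · linarith [ht0T.1]
        · apply hUP
          apply hball
          simp only [Metric.mem_ball, Real.dist_eq, add_sub_cancel_left, abs_of_pos (by linarith : (0:ℝ) < ε/2)]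
          linarith
      have := le_csSup hTbdd hmem
      linarith
    obtain ⟨i, hiw⟩ := hex
    have hwQ : v + t0 • d ∈ Q i := by
      simp only [hQ]
      exact subset_convexHull ℝ ({v} ∪ F i) (Or.inr ⟨hwP, hiw⟩)
    have ht0pos : (0:ℝ) < t0 := lt_of_lt_of_le one_pos ht01
    have hxseg : x ∈ segment ℝ v (v + t0 • d) := by
      refine ⟨1 - t0⁻¹, t0⁻¹, ?_, by positivity, by ring, ?_⟩
      · simp only [sub_nonneg]
        exact inv_le_one_of_one_le₀ ht01
      · have h1 : t0⁻¹ • (t0 • d) = d := by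
          rw [smul_smul, inv_mul_cancel₀ (ne_of_gt ht0pos), one_smul]
        rw [smul_add, h1, hd]
        module
    exact Set.mem_iUnion.mpr ⟨i, (hQconv i).segment_subset (hvQ i) hwQ hxseg⟩
  have hunion : (⋃ i, Q i) = P := subset_antisymm (Set.iUnion_subset hQP) hcover
  -- pairwise null intersections
  have hnull : ∀ i j : Fin s, i ≠ j → volume (Q i ∩ Q j) = 0 := by
    intro i j hij
    rcases eq_or_lt_of_le (hle i) with hieq | hilt
    · have hQH : Q i ⊆ H i := by
        apply convexHull_min _ (convex_hyperplane (f i).isLinear (b i))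
        rintro x (rfl | hx)
        · exact hieq
        · exact hx.2
      exact measure_mono_null (Set.inter_subset_left.trans hQH)
        (hyperplane_volume_zero (f i) (hf i) (b i))
    rcases eq_or_lt_of_le (hle j) with hjeq | hjlt
    · have hQH : Q j ⊆ H j := by
        apply convexHull_min _ (convex_hyperplane (f j).isLinear (b j))
        rintro x (rfl | hx)
        · exact hjeq
        · exact hx.2
      exact measure_mono_null (Set.inter_subset_right.trans hQH)
        (hyperplane_volume_zero (f j) (hf j) (b j))
    -- main case: v is strictly inside both halfspaces
    have key : ∀ x ∈ Q i ∩ Q j, x ≠ v →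
        ∃ w, f i w = b i ∧ f j w = b j ∧ ∃ t : ℝ, x = (1 - t) • v + t • w := by
      rintro x ⟨hxi, hxj⟩ hxv
      obtain ⟨w1, hw1, t1, ht10, ht11, hx1⟩ := hQmem i x hxi
      obtain ⟨w2, hw2, t2, ht20, ht21, hx2⟩ := hQmem j x hxj
      rcases hw1 with hw1 | hw1
      swap
      · exact absurd (by rw [hx1, Set.mem_singleton_iff.mp hw1]; module) hxv
      rcases hw2 with hw2 | hw2
      swap
      · exact absurd (by rw [hx2, Set.mem_singleton_iff.mp hw2]; module) hxv
      have ht1pos : 0 < t1 := by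
        rcases lt_or_eq_of_le ht10 with h | h
        · exact h
        · exact absurd (by rw [hx1, ← h]; module) hxv
      have ht2pos : 0 < t2 := by
        rcases lt_or_eq_of_le ht20 with h | h
        · exact h
        · exact absurd (by rw [hx2, ← h]; module) hxv
      have hvec : t1 • (w1 - v) = t2 • (w2 - v) := by
        have e1 : t1 • (w1 - v) = x - v := by rw [hx1]; module
        have e2 : t2 • (w2 - v) = x - v := by rw [hx2]; module
        rw [e1, e2]
      -- scalar relations
      have hw1i : f i w1 = b i := hw1.2
      have hw2j : f j w2 = b j := hw2.2
      have hw1jle : f j w1 ≤ b j := by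
        have := hP ▸ hw1.1; exact this j
      have hw2ile : f i w2 ≤ b i := by
        have := hP ▸ hw2.1; exact this i
      have ej : t1 * (f j w1 - f j v) = t2 * (b j - f j v) := by
        have := congrArg (f j) hvec
        simp only [_root_.map_smul, map_sub, smul_eq_mul] at this
        rw [hw2j] at this
        linarith
      have ei : t1 * (b i - f i v) = t2 * (f i w2 - f i v) := by
        have := congrArg (f i) hvec
        simp only [_root_.map_smul, map_sub, smul_eq_mul] at this
        rw [hw1i] at this
        linarith
      have ht12 : t1 = t2 := by
        have h1 : t2 * (b j - f j v) ≤ t1 * (b j - f j v) := by nlinarith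
        have h2 : t1 * (b i - f i v) ≤ t2 * (b i - f i v) := by nlinarith
        have := (mul_le_mul_iff_left₀ (by linarith : (0:ℝ) < b j - f j v)).mp h1
        have := (mul_le_mul_iff_left₀ (by linarith : (0:ℝ) < b i - f i v)).mp h2
        linarith
      have hw12 : w1 = w2 := by
        have : t1 • (w1 - v) = t1 • (w2 - v) := by rw [hvec, ht12]
        have h := smul_right_injective (Fin n → ℝ) (ne_of_gt ht1pos) this
        have := sub_left_injective h
        exact this
      have hw1j : f j w1 = b j := by rw [hw12]; exact hw2j
      exact ⟨w1, hw1i, hw1j, t1, hx1⟩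
    by_cases hex : ∃ x ∈ Q i ∩ Q j, x ≠ v
    · obtain ⟨x, hx, hxv⟩ := hex
      obtain ⟨w0, hw0i, hw0j, -⟩ := key x hx hxv
      set α : ℝ := b j - f j v with hα
      set β : ℝ := f i v - b i with hβ
      set g : (Fin n → ℝ) →ₗ[ℝ] ℝ := α • f i + β • f j with hg
      set c : ℝ := α * b i + β * b j with hc
      have hαpos : 0 < α := by rw [hα]; linarith
      have hβneg : β < 0 := by rw [hβ]; linarith
      have hgapp : ∀ y, g y = α * f i y + β * f j y := fun y => by
        simp [hg, LinearMap.add_apply, LinearMap.smul_apply, smul_eq_mul]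
      have hgv : g v = c := by rw [hgapp, hα, hβ, hc]; ring
      have hgw : ∀ w, f i w = b i → f j w = b j → g w = c := by
        intro w h1 h2
        rw [hgapp, h1, h2, hc]
      have hgne : g ≠ 0 := by
        intro h0
        apply hdist i j hij
        have hk : ∀ y, α * f i y = (b i - f i v) * f j y := by
          intro y
          have : g y = 0 := by rw [h0]; rfl
          rw [hgapp] at this
          rw [hβ] at this
          linarith
        have hbb : α * b i = (b i - f i v) * b j := by
          have := hk w0
          rw [hw0i, hw0j] at this
          exact this
        ext x
        simp only [Set.mem_setOf_eq]
        constructor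
        · intro h
          have h1 := hk x
          rw [h] at h1
          rw [hbb] at h1
          have hbi : (0:ℝ) < b i - f i v := by linarith
          have := mul_left_cancel₀ (ne_of_gt hbi) h1.symm
          linarith
        · intro h
          have h1 := hk x
          rw [h, ← hbb] at h1
          exact mul_left_cancel₀ (ne_of_gt hαpos) h1
      have hsub : Q i ∩ Q j ⊆ {x | g x = c} := by
        intro y hy
        by_cases hyv : y = v
        · rw [hyv]; exact hgv
        · obtain ⟨w, hwi, hwj, t, hyt⟩ := key y hy hyv
          show g y = c
          rw [hyt]
          have : g ((1 - t) • v + t • w) = (1 - t) * g v + t * g w := by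
            simp [map_add, _root_.map_smul, smul_eq_mul]
          rw [this, hgv, hgw w hwi hwj]
          ring
      exact measure_mono_null hsub (hyperplane_volume_zero g hgne c)
    · push_neg at hex
      have hsub : Q i ∩ Q j ⊆ {x | f i x = f i v} := by
        intro y hy
        rw [hex y hy]
        rfl
      exact measure_mono_null hsub (hyperplane_volume_zero (f i) (hf i) (f i v))
  have hmeas : ∀ i, NullMeasurableSet (Q i) volume := fun i => (hQconv i).nullMeasurableSet _
  calc volume P = volume (⋃ i, Q i) := by rw [hunion]
    _ = ∑' i, volume (Q i) := measure_iUnion₀ (fun i j hij => hnull i j hij) hmeas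
    _ = ∑ i, volume (Q i) := tsum_fintype _
end

section
/- Let λ₁, …, λ_d be a basis of ℝ^d and let ℓ₁, …, ℓ_d be linear forms on ℝ^d with ℓᵢ(λⱼ) = 0 for i ≠ j and ℓᵢ(λᵢ) > 0. Let μ ∈ ℝ^d satisfy ℓ_d(μ) < 0, and for 1 ≤ i ≤ d−1 define the linear form kᵢ = −ℓ_d(μ)·ℓᵢ + ℓᵢ(μ)·ℓ_d. Then the set of nonnegative linear combinations of λ₁, …, λ_{d−1}, μ equals {x ∈ ℝ^d : kᵢ(x) ≥ 0 for i = 1, …, d−1, and ℓ_d(x) ≤ 0}. -/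
/-- Piggyback cone: if `λ₁, …, λ_d` is a basis of `ℝ^d` (here `d = n+1`), `ℓ₁, …, ℓ_d` are
linear forms with `ℓᵢ(λⱼ) = 0` for `i ≠ j` and `ℓᵢ(λᵢ) > 0`, and `μ` satisfies `ℓ_d(μ) < 0`,
then the cone of nonnegative combinations of `λ₁, …, λ_{d-1}, μ` is cut out by the
inequalities `kᵢ(x) ≥ 0` (`kᵢ = -ℓ_d(μ)·ℓᵢ + ℓᵢ(μ)·ℓ_d`, `i = 1, …, d-1`) and `ℓ_d(x) ≤ 0`. -/
theorem piggyback_cone (n : ℕ) (lam : Fin (n + 1) → (Fin (n + 1) → ℝ))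
    (ell : Fin (n + 1) → ((Fin (n + 1) → ℝ) →ₗ[ℝ] ℝ))
    (hlam_li : LinearIndependent ℝ lam)
    (hlam_span : Submodule.span ℝ (Set.range lam) = ⊤)
    (hell_zero : ∀ i j, i ≠ j → ell i (lam j) = 0)
    (hell_pos : ∀ i, 0 < ell i (lam i))
    (mu : Fin (n + 1) → ℝ) (hmu : ell (Fin.last n) mu < 0) :
    {x : Fin (n + 1) → ℝ | ∃ c : Fin (n + 1) → ℝ, (∀ i, 0 ≤ c i) ∧
        x = (∑ i : Fin n, c i.castSucc • lam i.castSucc) + c (Fin.last n) • mu} =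
      {x : Fin (n + 1) → ℝ |
        (∀ i : Fin n,
          0 ≤ ((-(ell (Fin.last n) mu)) • ell i.castSucc
                + (ell i.castSucc mu) • ell (Fin.last n)) x) ∧
        ell (Fin.last n) x ≤ 0} := by
  have hspan : ⊤ ≤ Submodule.span ℝ (Set.range lam) := hlam_span.ge
  set a : ℝ := ell (Fin.last n) mu with ha
  have hane : a ≠ 0 := ne_of_lt hmu
  -- injectivity of the map v ↦ (ell j v)_j
  have hinj : ∀ v : Fin (n+1) → ℝ, (∀ j, ell j v = 0) → v = 0 := by
    intro v hv
    let b : Module.Basis (Fin (n+1)) ℝ (Fin (n+1) → ℝ) := Module.Basis.mk hlam_li hspan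
    have hb : ∀ i, b i = lam i := fun i => Module.Basis.mk_apply hlam_li hspan i
    have hrepr : ∀ j, b.repr v j = 0 := by
      intro j
      have hv' := hv j
      conv_lhs at hv' => rw [← b.sum_repr v]
      rw [map_sum] at hv'
      have hz : ∀ i ∈ Finset.univ, i ≠ j → ell j (b.repr v i • b i) = 0 := by
        intro i _ hij
        rw [map_smul, hb, hell_zero j i (Ne.symm hij), smul_zero]
      rw [Finset.sum_eq_single j (fun i _ hij => hz i (Finset.mem_univ i) hij)
        (fun h => absurd (Finset.mem_univ j) h)] at hv'
      rw [map_smul, hb] at hv'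
      simp only [smul_eq_mul] at hv'
      rcases mul_eq_zero.mp hv' with h | h
      · exact h
      · exact absurd h (ne_of_gt (hell_pos j))
    have hs := b.sum_repr v
    rw [← hs]
    simp [hrepr]
  -- compute ell j on a combination
  have hcomb : ∀ (c : Fin (n+1) → ℝ) (j : Fin (n+1)),
      ell j ((∑ i : Fin n, c i.castSucc • lam i.castSucc) + c (Fin.last n) • mu)
        = (∑ i : Fin n, c i.castSucc * ell j (lam i.castSucc)) + c (Fin.last n) * ell j mu := by
    intro c j
    simp [map_add, map_sum, map_smul]
  have hcomb_last : ∀ (c : Fin (n+1) → ℝ),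
      ell (Fin.last n) ((∑ i : Fin n, c i.castSucc • lam i.castSucc) + c (Fin.last n) • mu)
        = c (Fin.last n) * a := by
    intro c
    rw [hcomb]
    have hz : ∀ i : Fin n, c i.castSucc * ell (Fin.last n) (lam i.castSucc) = 0 := by
      intro i
      rw [hell_zero _ _ (Fin.castSucc_lt_last i).ne', mul_zero]
    simp [hz, ← ha]
  have hcomb_cast : ∀ (c : Fin (n+1) → ℝ) (i : Fin n),
      ell i.castSucc ((∑ i : Fin n, c i.castSucc • lam i.castSucc) + c (Fin.last n) • mu)
        = c i.castSucc * ell i.castSucc (lam i.castSucc) + c (Fin.last n) * ell i.castSucc mu := by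
    intro c i
    rw [hcomb]
    congr 1
    rw [Finset.sum_eq_single i]
    · intro k _ hk
      rw [hell_zero _ _ (fun h => hk (Fin.castSucc_injective n h).symm), mul_zero]
    · intro h; exact absurd (Finset.mem_univ i) h
  ext x
  simp only [Set.mem_setOf_eq]
  constructor
  · rintro ⟨c, hc, rfl⟩
    constructor
    · intro i
      simp only [LinearMap.add_apply, LinearMap.smul_apply, smul_eq_mul]
      rw [hcomb_cast, hcomb_last]
      have h1 := hc i.castSucc
      have h2 := hell_pos i.castSucc
      nlinarith [mul_nonneg h1 (le_of_lt h2)]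
    · rw [hcomb_last]
      have := hc (Fin.last n)
      nlinarith
  · rintro ⟨hk, hd⟩
    set cd : ℝ := ell (Fin.last n) x / a with hcd
    set cf : Fin (n+1) → ℝ := fun j =>
      if j = Fin.last n then cd else (ell j x - cd * ell j mu) / ell j (lam j) with hcf
    have hcf_last : cf (Fin.last n) = cd := by simp [hcf]
    have hcf_cast : ∀ i : Fin n,
        cf i.castSucc = (ell i.castSucc x - cd * ell i.castSucc mu)
          / ell i.castSucc (lam i.castSucc) := by
      intro i
      simp [hcf, (Fin.castSucc_lt_last i).ne]
    have hcda : cd * a = ell (Fin.last n) x := div_mul_cancel₀ _ hane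
    have hna : (0:ℝ) < -a := by linarith
    refine ⟨cf, ?_, ?_⟩
    · intro j
      induction j using Fin.lastCases with
      | last =>
        rw [hcf_last, hcd, ha, ← neg_div_neg_eq]
        exact div_nonneg (by linarith) (by linarith)
      | cast i =>
        rw [hcf_cast i]
        apply div_nonneg _ (le_of_lt (hell_pos i.castSucc))
        have hki := hk i
        simp only [LinearMap.add_apply, LinearMap.smul_apply, smul_eq_mul] at hki
        have hki' : 0 ≤ -a * ell i.castSucc x + ell i.castSucc mu * (cd * a) := by
          rw [hcda]; exact hki
        have h2 : 0 ≤ (-a) * (ell i.castSucc x - cd * ell i.castSucc mu) := by nlinarith [hki']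
        have h3 := div_nonneg h2 (le_of_lt hna)
        rwa [mul_div_cancel_left₀ _ (ne_of_gt hna)] at h3
    · have key : ∀ j, ell j ((∑ i : Fin n, cf i.castSucc • lam i.castSucc)
          + cf (Fin.last n) • mu) = ell j x := by
        intro j
        induction j using Fin.lastCases with
        | last => rw [hcomb_last, hcf_last, hcda]
        | cast i =>
          rw [hcomb_cast, hcf_last, hcf_cast i,
            div_mul_cancel₀ _ (ne_of_gt (hell_pos i.castSucc))]
          ring
      have h0 := hinj (x - ((∑ i : Fin n, cf i.castSucc • lam i.castSucc)
        + cf (Fin.last n) • mu)) (fun j => by rw [map_sub, key j, sub_self])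
      exact sub_eq_zero.mp h0
end
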